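/- For a boolean element w of a Coxeter group W, the Bruhat interval [e, w] is isomorphic as a poset to the Boolean lattice of subsets of the set of simple reflections occurring in a reduced expression of w. -/

import Mathlib

/-- The Bruhat order on a Coxeter group. -/
inductive BruhatLE {B W : Type*} [Group W] {M : CoxeterMatrix B} (cs : CoxeterSystem M W) :
    W → W → Prop
  | refl (x : W) : BruhatLE cs x x
  | step (x y t : W) : cs.IsReflection t → cs.length x < cs.length (x * t) →
      BruhatLE cs (x * t) y → BruhatLE cs x y

/-!
A word in pairwise distinct simple reflections is always reduced, and so is each of its
subwords. By the subword property, the elements below `w = s₁ ⋯ sₖ` are the products of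
subwords of `s₁ ⋯ sₖ`, and such a product determines the subword: a reduced word only uses
letters that occur in every other word for the same element. So subwords, i.e. subsets of
`{s₁, …, sₖ}`, parametrise `[e, w]`, with Bruhat order corresponding to inclusion.

Both the subword property and the statement about letters rest on the strong exchange
condition, which comes from the sign representation of `W` on `W × ℤˣ`. That `sᵢ` is not a
product of the other simple reflections is read off from the geometric representation:
`sᵢ` negates `eᵢ`, while the other simple reflections leave the `eᵢ`-coordinate unchanged.
-/

open List

namespace CoxeterMatrix

open Real

variable {B : Type*} (M : CoxeterMatrix B)

/-- `v ↦ 2 B(eᵢ, v)`, where `B(eᵢ, eⱼ) = -cos (π / mᵢⱼ)` is the bilinear form of the geometric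
representation. -/
noncomputable def geomForm (i : B) : Module.Dual ℝ (B →₀ ℝ) :=
  Finsupp.linearCombination ℝ fun j => -2 * cos (π / M i j)

theorem geomForm_single (i j : B) :
    M.geomForm i (Finsupp.single j 1) = -2 * cos (π / M i j) := by
  simp [geomForm]

theorem geomForm_single_self (i : B) : M.geomForm i (Finsupp.single i 1) = 2 := by
  simp [geomForm_single]

noncomputable def geomRefl (i : B) : (B →₀ ℝ) ≃ₗ[ℝ] (B →₀ ℝ) :=
  Module.reflection (M.geomForm_single_self i)

theorem geomRefl_apply (i : B) (v : B →₀ ℝ) :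
    M.geomRefl i v = v - M.geomForm i v • Finsupp.single i 1 :=
  Module.reflection_apply _ _

theorem geomRefl_apply_apply_of_ne {i j : B} (h : i ≠ j) (v : B →₀ ℝ) :
    M.geomRefl i v j = v j := by
  simp [geomRefl_apply, h]

/-- Up to the factor `sin (π / mᵢⱼ)`, the roots of the dihedral subsystem spanned by `i` and `j`. -/
noncomputable def dihedralVec (i j : B) (k : ℤ) : B →₀ ℝ :=
  sin ((k + 1) * (π / M i j)) • Finsupp.single i 1 + sin (k * (π / M i j)) • Finsupp.single j 1

theorem geomRefl_mul_geomRefl_dihedralVec (i j : B) (k : ℤ) :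
    (M.geomRefl i * M.geomRefl j) (M.dihedralVec i j k) = M.dihedralVec i j (k + 2) := by
  have sin_step (n : ℤ) : sin ((n + 2) * (π / M i j)) =
      2 * cos (π / M i j) * sin ((n + 1) * (π / M i j)) - sin (n * (π / M i j)) := by
    have h₁ := sin_add ((n + 1) * (π / M i j)) (π / M i j)
    have h₂ := sin_sub ((n + 1) * (π / M i j)) (π / M i j)
    ring_nf at h₁ h₂ ⊢
    linarith
  have hj : M.geomRefl j (M.dihedralVec i j k) =
      sin ((k + 1) * (π / M i j)) • Finsupp.single i 1 +
        sin ((k + 2) * (π / M i j)) • Finsupp.single j 1 := by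
    rw [geomRefl_apply, dihedralVec, map_add, map_smul, map_smul, geomForm_single_self,
      geomForm_single, M.symmetric j i, sin_step]
    module
  rw [LinearEquiv.mul_apply, hj, geomRefl_apply, dihedralVec, map_add, map_smul, map_smul,
    geomForm_single_self, geomForm_single]
  push_cast
  rw [show (k : ℝ) + 2 + 1 = (k + 1 : ℤ) + 2 by push_cast; ring,
    show (k : ℝ) + 2 = (k + 1 : ℤ) + 1 by push_cast; ring, sin_step]
  push_cast
  module

theorem geomRefl_mul_geomRefl_pow_dihedralVec (i j : B) (k : ℤ) (n : ℕ) :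
    ((M.geomRefl i * M.geomRefl j) ^ n) (M.dihedralVec i j k) = M.dihedralVec i j (k + 2 * n) := by
  induction n with
  | zero => simp
  | succ n ih =>
    rw [pow_succ', LinearEquiv.mul_apply, ih, geomRefl_mul_geomRefl_dihedralVec]
    push_cast
    ring_nf

theorem dihedralVec_add_two_mul (i j : B) (hm : M i j ≠ 0) (k : ℤ) :
    M.dihedralVec i j (k + 2 * M i j) = M.dihedralVec i j k := by
  have hθ (x : ℝ) : (x + 2 * M i j) * (π / M i j) = x * (π / M i j) + 2 * π := by
    field_simp
  simp only [dihedralVec]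
  push_cast
  rw [add_right_comm, hθ, hθ, sin_add_two_pi, sin_add_two_pi]

theorem sin_pi_div_ne_zero {i j : B} (hij : i ≠ j) (hm : M i j ≠ 0) : sin (π / M i j) ≠ 0 := by
  have h₂ : (2 : ℝ) ≤ M i j := by
    have := M.off_diagonal i j hij
    exact_mod_cast (show 2 ≤ M i j by omega)
  refine (sin_pos_of_pos_of_lt_pi (by positivity) ?_).ne'
  rw [div_lt_iff₀ (by linarith)]
  nlinarith [pi_pos]

theorem geomRefl_mul_geomRefl_pow_single {i j : B} (hij : i ≠ j) (hm : M i j ≠ 0) :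
    ((M.geomRefl i * M.geomRefl j) ^ M i j) (Finsupp.single i 1) = Finsupp.single i 1 ∧
      ((M.geomRefl i * M.geomRefl j) ^ M i j) (Finsupp.single j 1) = Finsupp.single j 1 := by
  have hsin := M.sin_pi_div_ne_zero hij hm
  have h₀ : M.dihedralVec i j 0 = sin (π / M i j) • Finsupp.single i 1 := by
    simp [dihedralVec]
  have h₁ : M.dihedralVec i j (-1) = -sin (π / M i j) • Finsupp.single j 1 := by
    simp [dihedralVec]
  have periodic (k : ℤ) := (M.geomRefl_mul_geomRefl_pow_dihedralVec i j k (M i j)).trans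
    (M.dihedralVec_add_two_mul i j hm k)
  constructor
  · refine smul_right_injective _ hsin ?_
    simpa only [← map_smul, h₀] using periodic 0
  · refine smul_right_injective _ (neg_ne_zero.2 hsin) ?_
    simpa only [← map_smul, h₁] using periodic (-1)

theorem geomRefl_mul_geomRefl_pow_eq_one {i j : B} (hij : i ≠ j) :
    (M.geomRefl i * M.geomRefl j) ^ M i j = 1 := by
  obtain hm | hm := eq_or_ne (M i j) 0
  · rw [hm, pow_zero]
  obtain ⟨hi, hj⟩ := M.geomRefl_mul_geomRefl_pow_single hij hm
  set c := cos (π / M i j)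
  have hc : 1 - c ^ 2 ≠ 0 := by
    rw [← sin_sq]
    exact pow_ne_zero 2 (M.sin_pi_div_ne_zero hij hm)
  have hform_ij : M.geomForm i (Finsupp.single j 1) = -2 * c := M.geomForm_single i j
  have hform_ji : M.geomForm j (Finsupp.single i 1) = -2 * c := by
    rw [M.geomForm_single, M.symmetric j i]
  ext1 v
  -- split `v` into its component in the plane of `e i, e j` and a vector fixed by both reflections
  set a := (M.geomForm i v + c * M.geomForm j v) / (2 * (1 - c ^ 2))
  set b := (M.geomForm j v + c * M.geomForm i v) / (2 * (1 - c ^ 2))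
  set v₀ := v - a • Finsupp.single i 1 - b • Finsupp.single j 1
  have hfix (k : B) (hk : M.geomForm k v₀ = 0) : M.geomRefl k v₀ = v₀ := by
    rw [geomRefl_apply, hk, zero_smul, sub_zero]
  have hv₀ : (M.geomRefl i * M.geomRefl j) v₀ = v₀ := by
    rw [LinearEquiv.mul_apply, hfix j, hfix i] <;>
    · simp only [v₀, a, b, map_sub, map_smul, geomForm_single_self, hform_ij, hform_ji,
        smul_eq_mul]
      field_simp
      ring
  have hv : v = v₀ + a • Finsupp.single i 1 + b • Finsupp.single j 1 := by
    simp only [v₀]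
    abel
  change _ = v
  rw [hv, map_add, map_add, map_smul, map_smul, hi, hj, LinearEquiv.pow_apply,
    Function.iterate_fixed hv₀]

theorem isLiftable_geomRefl : M.IsLiftable M.geomRefl := by
  intro i j
  obtain rfl | hij := eq_or_ne i j
  · ext1 v
    simp [(Module.involutive_reflection (M.geomForm_single_self i)) v, geomRefl]
  · exact M.geomRefl_mul_geomRefl_pow_eq_one hij

end CoxeterMatrix

namespace CoxeterSystem

variable {B W : Type*} [Group W] {M : CoxeterMatrix B} (cs : CoxeterSystem M W)

local prefix:100 "s" => cs.simple
local prefix:100 "π" => cs.wordProd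
local prefix:100 "ris " => cs.rightInvSeq
local prefix:100 "lis " => cs.leftInvSeq

theorem rightInvSeq_append (ω ω' : List B) :
    ris (ω ++ ω') = (ris ω).map (fun t => (π ω')⁻¹ * t * π ω') ++ ris ω' := by
  induction ω with
  | nil => simp
  | cons i ω ih =>
    simp only [cons_append, rightInvSeq, ih, map_cons, wordProd_append, mul_inv_rev]
    group

theorem leftInvSeq_eq_map_rightInvSeq (ω : List B) :
    lis ω = (ris ω).map (fun t => π ω * t * (π ω)⁻¹) := by
  induction ω with
  | nil => simp
  | cons i ω ih =>
    simp only [leftInvSeq, rightInvSeq, ih, map_cons, map_map, wordProd_cons, mul_inv_rev,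
      inv_simple]
    refine congrArg₂ _ (by simp [mul_assoc]) (map_congr_left fun t _ => ?_)
    simp only [Function.comp_apply, MulAut.conj_apply, inv_simple]
    group

theorem prod_map_flatten_replicate {G : Type*} [Monoid G] (f : B → G) (i j : B) (n : ℕ) :
    (((replicate n [i, j]).flatten).map f).prod = (f i * f j) ^ n := by
  simp [map_flatten, prod_flatten, map_replicate, prod_replicate]

theorem wordProd_flatten_replicate (i j : B) (n : ℕ) :
    π ((replicate n [i, j]).flatten) = (s i * s j) ^ n :=
  prod_map_flatten_replicate _ i j n

theorem simple_mul_pow_simple_mul_simple (i j : B) (n : ℕ) :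
    s j * (s i * s j) ^ n = ((s i * s j) ^ n)⁻¹ * s j := by
  have h : SemiconjBy (s j) (s i * s j) (s i * s j)⁻¹ := by
    simp [SemiconjBy, mul_assoc]
  rw [(h.pow_right n).eq, inv_pow]

theorem rightInvSeq_flatten_replicate (i j : B) (n : ℕ) :
    ris ((replicate n [i, j]).flatten) =
      ((range (2 * n)).map fun k => s j * (s i * s j) ^ k).reverse := by
  induction n with
  | zero => simp
  | succ n ih =>
    have hconj := cs.simple_mul_pow_simple_mul_simple i j n
    have h₁ : (s j * (s i * s j) ^ n)⁻¹ * s i * (s j * (s i * s j) ^ n) =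
        s j * (s i * s j) ^ (2 * n + 1) := by
      rw [mul_inv_rev, inv_simple]
      simp only [← mul_assoc]
      rw [← hconj]
      simp only [mul_assoc, ← pow_succ', ← pow_add]
      ring_nf
    have h₂ : ((s i * s j) ^ n)⁻¹ * s j * (s i * s j) ^ n = s j * (s i * s j) ^ (2 * n) := by
      rw [← hconj, mul_assoc, ← pow_add, two_mul]
    rw [replicate_succ, flatten_cons, cons_append, cons_append, nil_append,
      show 2 * (n + 1) = 2 * n + 1 + 1 by ring, range_succ, range_succ]
    simp only [rightInvSeq, ih, wordProd_cons, wordProd_flatten_replicate, h₁, h₂, map_append,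
      map_cons, map_nil, reverse_append, reverse_cons, reverse_nil, nil_append, cons_append]

theorem _root_.List.count_map_conj {G : Type*} [Group G] [DecidableEq G] (L : List G)
    (g u : G) : (L.map fun z => g * z * g⁻¹).count (g * u * g⁻¹) = L.count u :=
  count_map_of_injective L _ (MulAut.conj g).injective u

theorem _root_.List.count_map_inv_conj {G : Type*} [Group G] [DecidableEq G] (L : List G)
    (g u : G) : (L.map fun z => g⁻¹ * z * g).count (g⁻¹ * u * g) = L.count u := by
  simpa using count_map_conj L g⁻¹ u

theorem _root_.List.count_map_inv_conj_self {G : Type*} [Group G] [DecidableEq G] (L : List G)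
    (t : G) : (L.map fun z => t⁻¹ * z * t).count t = L.count t := by
  simpa using count_map_inv_conj L t t

section SignRepresentation

open scoped Classical

noncomputable def signPerm (i : B) : Equiv.Perm (W × ℤˣ) :=
  (MulAut.conj (s i)).toEquiv.prodShear fun u => Equiv.mulLeft (if u = s i then -1 else 1)

theorem prod_map_signPerm_apply (ω : List B) (u : W) (ε : ℤˣ) :
    (ω.map cs.signPerm).prod (u, ε) =
      (π ω * u * (π ω)⁻¹, (-1) ^ (ris ω).count u * ε) := by
  induction ω generalizing u ε with
  | nil => simp
  | cons i ω ih =>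
    rw [map_cons, prod_cons, Equiv.Perm.mul_apply, ih]
    have hiff : π ω * u * (π ω)⁻¹ = s i ↔ (π ω)⁻¹ * s i * π ω = u := by
      constructor <;> intro h <;> rw [← h] <;> group
    simp only [signPerm, Equiv.prodShear_apply, MulEquiv.toEquiv_eq_coe, MulEquiv.coe_toEquiv,
      MulAut.conj_apply, Equiv.coe_mulLeft, rightInvSeq, count_cons, wordProd_cons, mul_inv_rev,
      inv_simple, hiff, beq_iff_eq, pow_add]
    refine Prod.ext (by simp only [mul_assoc]) ?_
    split_ifs <;> simp [mul_comm]

theorem even_count_rightInvSeq_braid (i j : B) (u : W) :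
    Even ((ris ((replicate (M i j) [i, j]).flatten)).count u) := by
  rw [rightInvSeq_flatten_replicate, count_reverse, two_mul, range_add, map_append, map_map,
    count_append]
  have hperiodic : (range (M i j)).map ((fun k => s j * (s i * s j) ^ k) ∘ (M i j + ·)) =
      (range (M i j)).map fun k => s j * (s i * s j) ^ k :=
    map_congr_left fun k _ => by simp [pow_add, simple_mul_simple_pow]
  rw [hperiodic]
  exact ⟨_, rfl⟩

theorem isLiftable_signPerm : M.IsLiftable cs.signPerm := by
  intro i j
  rw [← prod_map_flatten_replicate]
  ext ⟨u, ε⟩ : 1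
  rw [prod_map_signPerm_apply, wordProd_flatten_replicate, simple_mul_simple_pow,
    (cs.even_count_rightInvSeq_braid i j u).neg_one_pow]
  simp

noncomputable def signRep : W →* Equiv.Perm (W × ℤˣ) :=
  cs.lift ⟨cs.signPerm, cs.isLiftable_signPerm⟩

theorem signRep_wordProd (ω : List B) : cs.signRep (π ω) = (ω.map cs.signPerm).prod := by
  rw [wordProd, map_list_prod, map_map]
  exact congrArg _ (map_congr_left fun i _ => cs.lift_apply_simple cs.isLiftable_signPerm i)

theorem odd_count_rightInvSeq_iff {ω ω' : List B} (h : π ω = π ω') (t : W) :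
    Odd ((ris ω).count t) ↔ Odd ((ris ω').count t) := by
  have key := congrArg (fun w => (cs.signRep w (t, 1)).2) h
  simp only [signRep_wordProd, prod_map_signPerm_apply, mul_one] at key
  rw [← neg_one_pow_eq_neg_one_iff_odd (R := ℤˣ) (by decide), key,
    neg_one_pow_eq_neg_one_iff_odd (by decide)]

theorem odd_count_rightInvSeq_append_cons_reverse (ρ : List B) (i : B) :
    Odd ((ris (ρ ++ i :: ρ.reverse)).count (π ρ * s i * (π ρ)⁻¹)) := by
  have h₁ : ((ris ρ).map fun z => (π (i :: ρ.reverse))⁻¹ * z * π (i :: ρ.reverse)).count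
      (π ρ * s i * (π ρ)⁻¹) = (ris ρ).count (s i) := by
    rw [show π ρ * s i * (π ρ)⁻¹ = (π (i :: ρ.reverse))⁻¹ * s i * π (i :: ρ.reverse) by
      simp [wordProd_cons, mul_assoc], count_map_inv_conj]
  have h₂ : (ris ρ.reverse).count (π ρ * s i * (π ρ)⁻¹) = (ris ρ).count (s i) := by
    rw [rightInvSeq_reverse, count_reverse, leftInvSeq_eq_map_rightInvSeq, count_map_conj]
  rw [rightInvSeq_append, count_append, h₁, rightInvSeq, count_cons, h₂, wordProd_reverse, inv_inv]
  simp

/-- Strong exchange. Appending a word for `t` adds an odd number of copies of `t` to the right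
inversion sequence, so if `t` did not occur in it, `t` would be an inversion of `w * t`. -/
theorem mem_rightInvSeq_of_isRightInversion {ω : List B} {t : W}
    (ht : cs.IsRightInversion (π ω) t) : t ∈ ris ω := by
  have htt := ht.1.mul_self
  obtain ⟨x, i, rfl⟩ := ht.1
  obtain ⟨ρ, rfl⟩ := cs.wordProd_surjective x
  by_contra hnotin
  have hδ : π (ρ ++ i :: ρ.reverse) = π ρ * s i * (π ρ)⁻¹ := by
    simp [wordProd_append, wordProd_cons, mul_assoc]
  obtain ⟨ω₁, hred, hω₁⟩ := cs.exists_isReduced (π (ω ++ (ρ ++ i :: ρ.reverse)))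
  have hodd : Odd ((ris (ω ++ (ρ ++ i :: ρ.reverse))).count (π ρ * s i * (π ρ)⁻¹)) := by
    rw [rightInvSeq_append, count_append, hδ, count_map_inv_conj_self, count_eq_zero.2 hnotin,
      zero_add]
    exact odd_count_rightInvSeq_append_cons_reverse cs ρ i
  rw [odd_count_rightInvSeq_iff cs hω₁] at hodd
  have hinv := (cs.isRightInversion_of_mem_rightInvSeq hred (count_pos_iff.1 hodd.pos)).2
  rw [← hω₁, wordProd_append, hδ, mul_assoc, htt, mul_one] at hinv
  exact absurd ht.2 hinv.not_gt

end SignRepresentation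

theorem exists_eraseIdx_of_isRightInversion {ω : List B} {t : W}
    (ht : cs.IsRightInversion (π ω) t) : ∃ j, π ω * t = π (ω.eraseIdx j) := by
  obtain ⟨j, hj, rfl⟩ := mem_iff_getElem.1 (cs.mem_rightInvSeq_of_isRightInversion ht)
  exact ⟨j, by rw [← getD_eq_getElem _ 1 hj, wordProd_mul_getD_rightInvSeq]⟩

theorem mem_of_wordProd_eq_simple {ω : List B} {i : B} (h : π ω = s i) : i ∈ ω := by
  by_contra hi
  let ρ := cs.lift ⟨M.geomRefl, M.isLiftable_geomRefl⟩
  have hρ : ∀ ω : List B, i ∉ ω → ∀ v : B →₀ ℝ, ρ (π ω) v i = v i := by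
    intro ω hω v
    induction ω with
    | nil => simp
    | cons j ω ih =>
      rw [mem_cons, not_or] at hω
      rw [wordProd_cons, map_mul, LinearEquiv.mul_apply, cs.lift_apply_simple,
        M.geomRefl_apply_apply_of_ne (Ne.symm hω.1), ih hω.2]
  have := hρ ω hi (Finsupp.single i 1)
  rw [h, cs.lift_apply_simple, M.geomRefl_apply, M.geomForm_single_self] at this
  norm_num at this

theorem mem_of_isRightDescent {ω : List B} {i : B} (h : cs.IsRightDescent (π ω) i) : i ∈ ω := by
  obtain ⟨j, hj⟩ := cs.exists_eraseIdx_of_isRightInversion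
    ((cs.isRightInversion_simple_iff_isRightDescent _ _).2 h)
  have hword : π (ω.reverse ++ ω.eraseIdx j) = s i := by
    rw [wordProd_append, wordProd_reverse, ← hj, inv_mul_cancel_left]
  rcases mem_append.1 (cs.mem_of_wordProd_eq_simple hword) with hi | hi
  · exact mem_reverse.1 hi
  · exact (eraseIdx_sublist ω j).subset hi

theorem isReduced_of_nodup {ω : List B} (hω : ω.Nodup) : cs.IsReduced ω := by
  induction ω using reverseRecOn with
  | nil => simp [IsReduced]
  | append_singleton ω i ih =>
    rw [nodup_append] at hω
    have hi : i ∉ ω := fun hi => hω.2.2 i hi i (mem_singleton_self i) rfl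
    have hlen := cs.not_isRightDescent_iff.1 fun hd => hi (cs.mem_of_isRightDescent hd)
    rw [IsReduced, wordProd_append, wordProd_singleton, hlen, ih hω.1, length_append,
      length_singleton]

theorem IsReduced.subset_of_wordProd_eq {cs : CoxeterSystem M W} {ω ω' : List B}
    (hω : cs.IsReduced ω) (h : cs.wordProd ω = cs.wordProd ω') : ω ⊆ ω' := by
  induction ω using reverseRecOn generalizing ω' with
  | nil => simp
  | append_singleton ω i ih =>
    have hprefix : cs.wordProd ω' * cs.simple i = cs.wordProd ω := by
      rw [← h, wordProd_append, wordProd_singleton, simple_mul_simple_cancel_right]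
    have hdesc : cs.IsRightDescent (cs.wordProd ω') i := by
      have := cs.length_wordProd_le ω
      rw [IsRightDescent, hprefix, ← h, hω, length_append, length_singleton]
      omega
    obtain ⟨j, hj⟩ := cs.exists_eraseIdx_of_isRightInversion
      ((cs.isRightInversion_simple_iff_isRightDescent _ _).2 hdesc)
    have hω₀ : cs.IsReduced ω := by simpa using hω.take ω.length
    intro a ha
    rcases mem_append.1 ha with ha | ha
    · exact (eraseIdx_sublist ω' j).subset (ih hω₀ (hprefix.symm.trans hj) ha)
    · rw [mem_singleton.1 ha]
      exact cs.mem_of_isRightDescent hdesc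

end CoxeterSystem

namespace BruhatLE

variable {B W : Type*} [Group W] {M : CoxeterMatrix B} {cs : CoxeterSystem M W}

theorem trans {x y z : W} (hxy : BruhatLE cs x y) (hyz : BruhatLE cs y z) : BruhatLE cs x z := by
  induction hxy with
  | refl => exact hyz
  | step x y t ht hlt _ ih => exact .step x z t ht hlt (ih hyz)

theorem exists_sublist_wordProd_eq {z w : W} (h : BruhatLE cs z w) {ω : List B}
    (hω : cs.wordProd ω = w) : ∃ u, u <+ ω ∧ cs.wordProd u = z := by
  induction h with
  | refl => exact ⟨ω, Sublist.refl ω, hω⟩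
  | step x y t ht hlt _ ih =>
    obtain ⟨u, hu, hux⟩ := ih hω
    have hinv : cs.IsRightInversion (cs.wordProd u) t := by
      rwa [hux, CoxeterSystem.IsRightInversion, mul_assoc, ht.mul_self, mul_one, and_iff_right ht]
    obtain ⟨j, hj⟩ := cs.exists_eraseIdx_of_isRightInversion hinv
    refine ⟨u.eraseIdx j, (eraseIdx_sublist u j).trans hu, ?_⟩
    rw [← hj, hux, mul_assoc, ht.mul_self, mul_one]

end BruhatLE

namespace CoxeterSystem

variable {B W : Type*} [Group W] {M : CoxeterMatrix B} (cs : CoxeterSystem M W)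

theorem bruhatLE_wordProd_of_sublist {u v : List B} (h : u <+ v) (hv : v.Nodup) :
    BruhatLE cs (cs.wordProd u) (cs.wordProd v) := by
  -- Bruhat order is not compatible with left multiplication, so the induction carries a prefix.
  suffices ∀ q : List B, (q ++ v).Nodup →
      BruhatLE cs (cs.wordProd (q ++ u)) (cs.wordProd (q ++ v)) by
    simpa using this [] hv
  clear hv
  induction h with
  | slnil => exact fun q _ => .refl _
  | @cons u v b _ ih =>
    intro q hq
    set t := (cs.wordProd v)⁻¹ * cs.simple b * cs.wordProd v
    have ht : cs.IsReflection t := ⟨(cs.wordProd v)⁻¹, b, by simp [t]⟩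
    have hmul : cs.wordProd (q ++ v) * t = cs.wordProd (q ++ b :: v) := by
      simp [t, wordProd_append, wordProd_cons, mul_assoc]
    have hlt : cs.length (cs.wordProd (q ++ v)) < cs.length (cs.wordProd (q ++ v) * t) := by
      have := cs.length_wordProd_le (q ++ v)
      rw [hmul, cs.isReduced_of_nodup hq]
      simp only [length_append, length_cons] at this ⊢
      omega
    refine (ih q (hq.sublist (by simp))).trans (.step _ _ t ht hlt ?_)
    rw [hmul]
    exact .refl _
  | @cons_cons u v b _ ih =>
    intro q hq
    simpa using ih (q ++ [b]) (by simpa using hq)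

variable [DecidableEq B] {l : List B}

theorem bruhatLE_wordProd_filter_iff (hl : l.Nodup) {X Y : Finset B} (hX : X ⊆ l.toFinset) :
    BruhatLE cs (cs.wordProd (l.filter (· ∈ X))) (cs.wordProd (l.filter (· ∈ Y))) ↔ X ⊆ Y := by
  constructor
  · intro h a ha
    obtain ⟨u, hu, hπ⟩ := h.exists_sublist_wordProd_eq rfl
    have hsub := (cs.isReduced_of_nodup (hl.sublist filter_sublist)).subset_of_wordProd_eq
      hπ.symm
    have haX : a ∈ l.filter (· ∈ X) := by simpa [ha] using hX ha
    exact (mem_filter.1 (hu.subset (hsub haX))).2 |> of_decide_eq_true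
  · intro hXY
    refine cs.bruhatLE_wordProd_of_sublist ?_ (hl.sublist filter_sublist)
    exact monotone_filter_right l fun a ha => by simpa using hXY (by simpa using ha)

theorem exists_wordProd_filter_eq_of_bruhatLE (hl : l.Nodup) {z : W}
    (h : BruhatLE cs z (cs.wordProd l)) : ∃ X ⊆ l.toFinset, cs.wordProd (l.filter (· ∈ X)) = z := by
  obtain ⟨u, hu, rfl⟩ := h.exists_sublist_wordProd_eq rfl
  refine ⟨u.toFinset, fun a ha => by simpa using hu.subset (by simpa using ha), congrArg _ ?_⟩
  refine (hl.perm_iff_eq_of_sublist filter_sublist hu).1 ?_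
  refine (perm_ext_iff_of_nodup (hl.sublist filter_sublist) (hl.sublist hu)).2 fun a => ?_
  simpa using fun ha => hu.subset ha

end CoxeterSystem

theorem boolean_interval_is_boolean_lattice_general
    {B W : Type*} [Group W] [DecidableEq B] {M : CoxeterMatrix B}
    (cs : CoxeterSystem M W)
    (w : W) (l : List B) (hnd : l.Nodup) (hw : cs.wordProd l = w) :
    ∃ e : {z : W // BruhatLE cs z w} ≃ {t : Finset B // t ⊆ l.toFinset},
      ∀ a b : {z : W // BruhatLE cs z w},
        BruhatLE cs a.1 b.1 ↔ (e a).1 ⊆ (e b).1 := by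
  subst hw
  let F : {t : Finset B // t ⊆ l.toFinset} → {z : W // BruhatLE cs z (cs.wordProd l)} :=
    fun t => ⟨cs.wordProd (l.filter (· ∈ t.1)), cs.bruhatLE_wordProd_of_sublist filter_sublist hnd⟩
  have hF (t t') : BruhatLE cs (F t).1 (F t').1 ↔ t.1 ⊆ t'.1 :=
    cs.bruhatLE_wordProd_filter_iff hnd t.2
  have hbij : F.Bijective := by
    refine ⟨fun t t' h => Subtype.ext ?_, fun z => ?_⟩
    · exact ((hF t t').1 (h ▸ .refl _)).antisymm ((hF t' t).1 (h ▸ .refl _))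
    · obtain ⟨X, hX, hz⟩ := cs.exists_wordProd_filter_eq_of_bruhatLE hnd z.2
      exact ⟨⟨X, hX⟩, Subtype.ext hz⟩
  refine ⟨(Equiv.ofBijective F hbij).symm, fun a b => ?_⟩
  rw [← hF, Equiv.ofBijective_apply_symm_apply F hbij, Equiv.ofBijective_apply_symm_apply F hbij]

/-- For a boolean element `w` of a Coxeter group (one with a reduced word `l` in which
every simple reflection occurs at most once), the Bruhat interval `[e, w] = {z : z ≤ w}`
is isomorphic as a poset to the Boolean lattice of subsets of the set of simple
reflections occurring in `w`, ordered by inclusion. -/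
theorem boolean_interval_is_boolean_lattice
    {B W : Type*} [Group W] [DecidableEq B] {M : CoxeterMatrix B}
    (cs : CoxeterSystem M W)
    (w : W) (l : List B) (hnd : l.Nodup) (hw : cs.wordProd l = w)
    (hred : cs.length w = l.length) :
    ∃ e : {z : W // BruhatLE cs z w} ≃ {t : Finset B // t ⊆ l.toFinset},
      ∀ a b : {z : W // BruhatLE cs z w},
        BruhatLE cs a.1 b.1 ↔ (e a).1 ⊆ (e b).1 :=
  boolean_interval_is_boolean_lattice_general cs w l hnd hw
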